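/- For finitely-valued (X,Y) with min{|𝒳|,|𝒴|} = 2, ρ_m²(X;Y) ≥ 2^{I(X;Y)} − 1, where I(X;Y) is the mutual information in bits. -/

import Mathlib

open MeasureTheory ProbabilityTheory Real

noncomputable def maxCorr {Ω α β : Type} [MeasurableSpace Ω] [MeasurableSpace α]
    [MeasurableSpace β] (μ : Measure Ω) (X : Ω → α) (Y : Ω → β) : ℝ :=
  sSup {r : ℝ | ∃ (g : α → ℝ) (f : β → ℝ), Measurable g ∧ Measurable f ∧
    (∫ ω, g (X ω) ∂μ) = 0 ∧ (∫ ω, f (Y ω) ∂μ) = 0 ∧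
    (∫ ω, (g (X ω))^2 ∂μ) = 1 ∧ (∫ ω, (f (Y ω))^2 ∂μ) = 1 ∧
    r = ∫ ω, g (X ω) * f (Y ω) ∂μ}

noncomputable def corr {Ω : Type} [MeasurableSpace Ω] (μ : Measure Ω) (U V : Ω → ℝ) : ℝ :=
  (∫ ω, (U ω - ∫ x, U x ∂μ) * (V ω - ∫ x, V x ∂μ) ∂μ) /
    (Real.sqrt (variance U μ) * Real.sqrt (variance V μ))

variable {Ω α β : Type} [MeasurableSpace Ω]
  [MeasurableSpace α] [MeasurableSingletonClass α] [Fintype α]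
  [MeasurableSpace β] [MeasurableSingletonClass β] [Fintype β]

/-- Joint pmf of finitely-valued (X,Y). -/
noncomputable def pJoint (μ : Measure Ω) (X : Ω → α) (Y : Ω → β) (x : α) (y : β) : ℝ :=
  (μ (X ⁻¹' {x} ∩ Y ⁻¹' {y})).toReal

/-- Marginal pmf. -/
noncomputable def pMarg (μ : Measure Ω) (X : Ω → α) (x : α) : ℝ := (μ (X ⁻¹' {x})).toReal

/-- χ²-divergence between the joint pmf and the product of marginals. -/
noncomputable def chiSq (μ : Measure Ω) (X : Ω → α) (Y : Ω → β) : ℝ :=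
  (∑ x : α, ∑ y : β, (pJoint μ X Y x y)^2 / (pMarg μ X x * pMarg μ Y y)) - 1

/-- Mutual information in bits for finitely-valued (X,Y). -/
noncomputable def miFin (μ : Measure Ω) (X : Ω → α) (Y : Ω → β) : ℝ :=
  ∑ x : α, ∑ y : β,
    pJoint μ X Y x y * Real.logb 2 (pJoint μ X Y x y / (pMarg μ X x * pMarg μ Y y))

/-!
Jensen's inequality for `exp`, weighted by the joint pmf, gives
`2 ^ I(X;Y) = exp (E[log ι]) ≤ E[ι] = χ²(X;Y) + 1`, with `ι` the likelihood ratio.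

If `X` takes two values `a, b`, then `g a = p_b / √(p_a p_b)`, `g b = -p_a / √(p_a p_b)` makes
`g(X)` standardized, and its conditional expectation `h(Y) = E[g(X) | Y]` has `E[h(Y)²] = χ²`.
Since `E[g(X) h(Y)] = E[h(Y)²]`, the standardized `h(Y) / √χ²` has correlation `√χ²` with `g(X)`,
so `χ² ≤ ρ_m²`. Binary `Y` is the same argument with the roles swapped.
-/

open Finset

lemma exp_sum_mul_log_div_le_sum_sq_div {ι : Type*} (s : Finset ι) {w u : ι → ℝ}
    (hw : ∀ i ∈ s, 0 ≤ w i) (hw1 : ∑ i ∈ s, w i = 1) (hu : ∀ i ∈ s, 0 < u i) :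
    exp (∑ i ∈ s, w i * log (w i / u i)) ≤ ∑ i ∈ s, w i ^ 2 / u i :=
  calc exp (∑ i ∈ s, w i * log (w i / u i))
      ≤ ∑ i ∈ s, w i * exp (log (w i / u i)) :=
        convexOn_exp.map_sum_le hw hw1 fun _ _ => Set.mem_univ _
    _ = ∑ i ∈ s, w i ^ 2 / u i := sum_congr rfl fun i hi => by
        rcases (hw i hi).eq_or_lt with h | h
        · simp [← h]
        · rw [exp_log (div_pos h (hu i hi)), sq, mul_div_assoc]

def corrSet {Ω α β : Type} [MeasurableSpace Ω] [MeasurableSpace α] [MeasurableSpace β]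
    (μ : Measure Ω) (X : Ω → α) (Y : Ω → β) : Set ℝ :=
  {r : ℝ | ∃ (g : α → ℝ) (f : β → ℝ), Measurable g ∧ Measurable f ∧
    (∫ ω, g (X ω) ∂μ) = 0 ∧ (∫ ω, f (Y ω) ∂μ) = 0 ∧
    (∫ ω, (g (X ω))^2 ∂μ) = 1 ∧ (∫ ω, (f (Y ω))^2 ∂μ) = 1 ∧
    r = ∫ ω, g (X ω) * f (Y ω) ∂μ}

omit [MeasurableSingletonClass α] [Fintype α] [MeasurableSingletonClass β] [Fintype β] in
lemma maxCorr_eq_sSup_corrSet (μ : Measure Ω) (X : Ω → α) (Y : Ω → β) :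
    maxCorr μ X Y = sSup (corrSet μ X Y) := rfl

omit [MeasurableSingletonClass α] [Fintype α] [MeasurableSingletonClass β] [Fintype β] in
lemma corrSet_comm (μ : Measure Ω) (X : Ω → α) (Y : Ω → β) :
    corrSet μ Y X = corrSet μ X Y := by
  ext r
  constructor <;>
  · rintro ⟨g, f, hg, hf, hg0, hf0, hg2, hf2, rfl⟩
    exact ⟨f, g, hf, hg, hf0, hg0, hf2, hg2, by simp_rw [mul_comm]⟩

omit [MeasurableSingletonClass α] [Fintype α] [MeasurableSingletonClass β] [Fintype β] in
lemma maxCorr_comm (μ : Measure Ω) (X : Ω → α) (Y : Ω → β) :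
    maxCorr μ Y X = maxCorr μ X Y := by
  rw [maxCorr_eq_sSup_corrSet, maxCorr_eq_sSup_corrSet, corrSet_comm]

section Pmf

variable {μ : Measure Ω} {X : Ω → α} {Y : Ω → β}

omit [MeasurableSpace α] [MeasurableSingletonClass α] [Fintype α] [MeasurableSpace β]
  [MeasurableSingletonClass β] [Fintype β] in
lemma pJoint_nonneg (x : α) (y : β) : 0 ≤ pJoint μ X Y x y := ENNReal.toReal_nonneg

omit [MeasurableSpace α] [MeasurableSingletonClass α] [Fintype α] [MeasurableSpace β]
  [MeasurableSingletonClass β] [Fintype β] in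
lemma pJoint_comm (x : α) (y : β) : pJoint μ Y X y x = pJoint μ X Y x y := by
  rw [pJoint, pJoint, Set.inter_comm]

lemma integral_comp_eq_sum_pMarg [IsFiniteMeasure μ] (hX : Measurable X) (g : α → ℝ) :
    ∫ ω, g (X ω) ∂μ = ∑ x, pMarg μ X x * g x := by
  rw [← integral_map hX.aemeasurable (measurable_of_countable g).aestronglyMeasurable,
    integral_fintype .of_finite]
  simp only [smul_eq_mul, measureReal_def, Measure.map_apply hX (measurableSet_singleton _), pMarg]

lemma integral_comp₂_eq_sum_pJoint [IsFiniteMeasure μ] (hX : Measurable X) (hY : Measurable Y)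
    (h : α → β → ℝ) :
    ∫ ω, h (X ω) (Y ω) ∂μ = ∑ x, ∑ y, pJoint μ X Y x y * h x y := by
  have hXY : Measurable fun ω => (X ω, Y ω) := hX.prodMk hY
  have hpre (x : α) (y : β) : (fun ω => (X ω, Y ω)) ⁻¹' {(x, y)} = X ⁻¹' {x} ∩ Y ⁻¹' {y} := by
    ext ω; simp [Prod.ext_iff]
  rw [← integral_map (f := fun p : α × β => h p.1 p.2) hXY.aemeasurable
      (measurable_of_countable _).aestronglyMeasurable,
    integral_fintype .of_finite, Fintype.sum_prod_type]
  simp only [smul_eq_mul, measureReal_def, Measure.map_apply hXY (measurableSet_singleton _),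
    hpre, pJoint]

omit [MeasurableSingletonClass β] [Fintype β] in
lemma sum_pMarg [IsProbabilityMeasure μ] (hX : Measurable X) : ∑ x, pMarg μ X x = 1 := by
  simpa using (integral_comp_eq_sum_pMarg (μ := μ) hX fun _ => 1).symm

lemma sum_pJoint_right [IsProbabilityMeasure μ] (hX : Measurable X) (hY : Measurable Y)
    (x₀ : α) :
    ∑ y, pJoint μ X Y x₀ y = pMarg μ X x₀ := by
  classical
  have h := integral_comp_eq_sum_pMarg (μ := μ) hX fun x => if x = x₀ then 1 else 0
  rw [integral_comp₂_eq_sum_pJoint hX hY fun x _ => if x = x₀ then 1 else 0] at h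
  simpa using h

lemma sum_pJoint_left [IsProbabilityMeasure μ] (hX : Measurable X) (hY : Measurable Y)
    (y₀ : β) :
    ∑ x, pJoint μ X Y x y₀ = pMarg μ Y y₀ := by
  simpa only [pJoint_comm] using sum_pJoint_right (μ := μ) hY hX y₀

omit [MeasurableSpace α] [MeasurableSingletonClass α] [MeasurableSpace β]
  [MeasurableSingletonClass β] in
lemma chiSq_comm : chiSq μ Y X = chiSq μ X Y := by
  simp only [chiSq, pJoint_comm, mul_comm (pMarg μ Y _)]
  rw [sum_comm]

lemma two_rpow_miFin_sub_one_le_chiSq [IsProbabilityMeasure μ] (hX : Measurable X)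
    (hY : Measurable Y) (hpX : ∀ x, 0 < pMarg μ X x) (hpY : ∀ y, 0 < pMarg μ Y y) :
    (2 : ℝ) ^ miFin μ X Y - 1 ≤ chiSq μ X Y := by
  have hjensen := exp_sum_mul_log_div_le_sum_sq_div (univ : Finset (α × β))
    (w := fun p => pJoint μ X Y p.1 p.2) (u := fun p => pMarg μ X p.1 * pMarg μ Y p.2)
    (fun _ _ => pJoint_nonneg _ _)
    (by simp only [Fintype.sum_prod_type, sum_pJoint_right hX hY, sum_pMarg hX])
    (fun p _ => mul_pos (hpX p.1) (hpY p.2))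
  rw [rpow_def_of_pos two_pos, chiSq, miFin]
  simp only [Fintype.sum_prod_type] at hjensen
  convert sub_le_sub_right hjensen 1 using 3
  simp only [mul_sum, logb]
  exact sum_congr rfl fun x _ => sum_congr rfl fun y _ => by field_simp

lemma le_one_of_mem_corrSet [IsFiniteMeasure μ] (hX : Measurable X) (hY : Measurable Y)
    {r : ℝ} (hr : r ∈ corrSet μ X Y) : r ≤ 1 := by
  obtain ⟨g, f, -, -, -, -, hg2, hf2, rfl⟩ := hr
  rw [integral_comp₂_eq_sum_pJoint hX hY fun x _ => g x ^ 2] at hg2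
  rw [integral_comp₂_eq_sum_pJoint hX hY fun _ y => f y ^ 2] at hf2
  rw [integral_comp₂_eq_sum_pJoint hX hY fun x y => g x * f y]
  calc ∑ x, ∑ y, pJoint μ X Y x y * (g x * f y)
      ≤ ∑ x, ∑ y, (pJoint μ X Y x y * g x ^ 2 + pJoint μ X Y x y * f y ^ 2) / 2 := by
        gcongr with x _ y _
        have hP := pJoint_nonneg (μ := μ) (X := X) (Y := Y) x y
        nlinarith [mul_nonneg hP (sq_nonneg (g x - f y))]
    _ = 1 := by simp only [← sum_div, sum_add_distrib, hg2, hf2]; norm_num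

lemma bddAbove_corrSet [IsFiniteMeasure μ] (hX : Measurable X) (hY : Measurable Y) :
    BddAbove (corrSet μ X Y) :=
  ⟨1, fun _ => le_one_of_mem_corrSet hX hY⟩

noncomputable def condMean (μ : Measure Ω) (X : Ω → α) (Y : Ω → β) (g : α → ℝ) (y : β) : ℝ :=
  (∑ x, pJoint μ X Y x y * g x) / pMarg μ Y y

lemma integral_comp_mul_condMean [IsFiniteMeasure μ] (hX : Measurable X)
    (hY : Measurable Y) (hpY : ∀ y, 0 < pMarg μ Y y) (g : α → ℝ) (k : β → ℝ) :
    ∫ ω, g (X ω) * k (Y ω) ∂μ = ∫ ω, condMean μ X Y g (Y ω) * k (Y ω) ∂μ := by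
  rw [integral_comp₂_eq_sum_pJoint hX hY fun x y => g x * k y,
    integral_comp_eq_sum_pMarg hY fun y => condMean μ X Y g y * k y, sum_comm]
  refine sum_congr rfl fun y _ => ?_
  rw [condMean, div_mul_eq_mul_div, mul_div_cancel₀ _ (hpY y).ne', sum_mul]
  exact sum_congr rfl fun x _ => by ring

lemma sqrt_integral_condMean_sq_mem_corrSet [IsFiniteMeasure μ] (hX : Measurable X)
    (hY : Measurable Y) (hpY : ∀ y, 0 < pMarg μ Y y) {g : α → ℝ} (hg0 : ∫ ω, g (X ω) ∂μ = 0)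
    (hg2 : ∫ ω, g (X ω) ^ 2 ∂μ = 1) (hh : 0 < ∫ ω, condMean μ X Y g (Y ω) ^ 2 ∂μ) :
    √(∫ ω, condMean μ X Y g (Y ω) ^ 2 ∂μ) ∈ corrSet μ X Y := by
  set h := condMean μ X Y g
  set v := √(∫ ω, h (Y ω) ^ 2 ∂μ)
  have hv : v ^ 2 = ∫ ω, h (Y ω) ^ 2 ∂μ := sq_sqrt hh.le
  have hv0 : v ≠ 0 := (sqrt_pos.mpr hh).ne'
  have hgh (k : β → ℝ) : ∫ ω, g (X ω) * k (Y ω) ∂μ = ∫ ω, h (Y ω) * k (Y ω) ∂μ :=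
    integral_comp_mul_condMean hX hY hpY g k
  refine ⟨g, fun y => h y / v, measurable_of_countable _, measurable_of_countable _, hg0, ?_, hg2,
    ?_, ?_⟩
  · have := hgh fun _ => 1
    simp only [mul_one] at this
    rw [integral_div, ← this, hg0, zero_div]
  · simp only [div_pow, integral_div, ← hv]
    exact div_self (pow_ne_zero 2 hv0)
  · simp only [mul_div_assoc', integral_div, hgh h, ← sq, ← hv]
    field_simp

lemma exists_integral_condMean_sq_eq_chiSq [IsProbabilityMeasure μ] (hX : Measurable X)
    (hY : Measurable Y) (hpX : ∀ x, 0 < pMarg μ X x) (hpY : ∀ y, 0 < pMarg μ Y y)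
    (hα : Fintype.card α = 2) :
    ∃ g : α → ℝ, ∫ ω, g (X ω) ∂μ = 0 ∧ ∫ ω, g (X ω) ^ 2 ∂μ = 1 ∧
      ∫ ω, condMean μ X Y g (Y ω) ^ 2 ∂μ = chiSq μ X Y := by
  classical
  obtain ⟨a, b, hab, huniv⟩ := card_eq_two.mp (by rwa [card_univ] : (univ : Finset α).card = 2)
  have hsum (F : α → ℝ) : ∑ x, F x = F a + F b := by rw [huniv, sum_pair hab]
  set pa := pMarg μ X a with hpa_def
  set pb := pMarg μ X b with hpb_def
  have hpab : pa + pb = 1 := by rw [← sum_pMarg (μ := μ) hX, hsum]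
  set t := √(pa * pb)
  have ht : t ^ 2 = pa * pb := sq_sqrt (mul_pos (hpX a) (hpX b)).le
  have ht0 : t ≠ 0 := (sqrt_pos.mpr (mul_pos (hpX a) (hpX b))).ne'
  set g : α → ℝ := fun x => if x = a then pb / t else -(pa / t)
  have hga : g a = pb / t := if_pos rfl
  have hgb : g b = -(pa / t) := if_neg hab.symm
  refine ⟨g, ?_, ?_, ?_⟩
  · rw [integral_comp_eq_sum_pMarg hX, hsum, hga, hgb]
    ring
  · rw [integral_comp_eq_sum_pMarg hX (fun x => g x ^ 2), hsum, hga, hgb]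
    field_simp
    linear_combination (pa * pb) * hpab - ht
  rw [integral_comp_eq_sum_pMarg hY (fun y => condMean μ X Y g y ^ 2), chiSq, sum_comm,
    eq_sub_iff_add_eq, ← sum_pMarg (μ := μ) hY, ← sum_add_distrib]
  refine sum_congr rfl fun y _ => ?_
  have hq : pJoint μ X Y a y + pJoint μ X Y b y = pMarg μ Y y := by
    rw [← sum_pJoint_left hX hY y, hsum]
  have hq0 := (hpY y).ne'
  rw [condMean, hsum, hsum, hga, hgb, ← hpa_def, ← hpb_def]
  have hpa : pa ≠ 0 := (hpX a).ne'
  have hpb : pb ≠ 0 := (hpX b).ne'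
  field_simp
  rw [ht, ← hq]
  linear_combination pa * pb * (pJoint μ X Y a y ^ 2 * pb + pJoint μ X Y b y ^ 2 * pa) * hpab

lemma chiSq_le_maxCorr_sq_of_card_eq_two [IsProbabilityMeasure μ] (hX : Measurable X)
    (hY : Measurable Y) (hpX : ∀ x, 0 < pMarg μ X x) (hpY : ∀ y, 0 < pMarg μ Y y)
    (hα : Fintype.card α = 2) :
    chiSq μ X Y ≤ maxCorr μ X Y ^ 2 := by
  rcases le_or_gt (chiSq μ X Y) 0 with hχ | hχ
  · exact hχ.trans (sq_nonneg _)
  obtain ⟨g, hg0, hg2, hgχ⟩ := exists_integral_condMean_sq_eq_chiSq hX hY hpX hpY hα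
  have hmem := sqrt_integral_condMean_sq_mem_corrSet hX hY hpY hg0 hg2 (hgχ ▸ hχ)
  rw [hgχ] at hmem
  calc chiSq μ X Y = √(chiSq μ X Y) ^ 2 := (sq_sqrt hχ.le).symm
    _ ≤ maxCorr μ X Y ^ 2 := by
      gcongr
      exact le_csSup (bddAbove_corrSet hX hY) hmem

end Pmf

theorem stmt10 (μ : Measure Ω) [IsProbabilityMeasure μ]
    (X : Ω → α) (Y : Ω → β) (hX : Measurable X) (hY : Measurable Y)
    (hpX : ∀ x : α, 0 < pMarg μ X x) (hpY : ∀ y : β, 0 < pMarg μ Y y)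
    (hcard : min (Fintype.card α) (Fintype.card β) = 2) :
    (maxCorr μ X Y)^2 ≥ (2:ℝ) ^ (miFin μ X Y) - 1 := by
  have hχ : chiSq μ X Y ≤ maxCorr μ X Y ^ 2 := by
    rcases (by omega : Fintype.card α = 2 ∨ Fintype.card β = 2) with hα | hβ
    · exact chiSq_le_maxCorr_sq_of_card_eq_two hX hY hpX hpY hα
    · rw [← chiSq_comm, ← maxCorr_comm]
      exact chiSq_le_maxCorr_sq_of_card_eq_two hY hX hpY hpX hβ
  exact (two_rpow_miFin_sub_one_le_chiSq hX hY hpX hpY).trans hχ
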